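/- arXiv:2108.03724 — 3 statements merged into one kernel-verified Lean document; each statement's English description precedes it below -/
import Mathlib

section
/- Let m be a positive integer, let a_1, ..., a_m be complex numbers, and let r_1 < r_2 < ... < r_m be strictly increasing positive real numbers. If the sum Σ_{k=1}^m a_k e^{i r_k t} tends to 0 as t → ∞ (t real), then a_k = 0 for all k = 1, ..., m. -/
/-!
Shifting `t` by `j * s` for `j = 0, …, m - 1` gives `m` sums that all tend to `0`; as a vector they
are `u t ᵥ* V`, where `u t = (a k * e^{i r_k t})_k` and `V` is the Vandermonde matrix of the nodes
`e^{i r_k s}`. For small `s ≠ 0` these nodes are distinct, so `V` is invertible and `u t → 0`.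
But `‖a k * e^{i r_k t}‖ = ‖a k‖` is constant, so every `a k` vanishes.
-/

open Filter Topology Complex Matrix

theorem eq_of_exp_mul_I_eq_of_abs_sub_lt {x y : ℝ} (hxy : |x - y| < 2 * Real.pi)
    (h : cexp (x * I) = cexp (y * I)) : x = y := by
  obtain ⟨n, hn⟩ := exp_eq_exp_iff_exists_int.1 h
  have hsub : x - y = n * (2 * Real.pi) := by
    have : (x : ℂ) * I = ↑(y + n * (2 * Real.pi)) * I := by push_cast; rw [hn]; ring
    linarith [ofReal_injective (mul_right_cancel₀ I_ne_zero this)]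
  have hn0 : n = 0 := by
    rw [hsub, abs_mul, abs_of_pos Real.two_pi_pos] at hxy
    have : |(n : ℝ)| < 1 := by nlinarith [Real.pi_pos]
    exact Int.abs_lt_one_iff.1 (by exact_mod_cast this)
  simpa [hn0, sub_eq_zero] using hsub

theorem exists_injective_exp_mul_I_mul {ι : Type*} [Finite ι] {r : ι → ℝ}
    (hr : Function.Injective r) : ∃ s : ℝ, Function.Injective fun k => cexp (I * r k * s) := by
  have hsmall : ∀ᶠ s in 𝓝[≠] (0 : ℝ), s ≠ 0 ∧ ∀ i j, |(r i - r j) * s| < 2 * Real.pi := by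
    refine (eventually_mem_nhdsWithin (a := 0)).and (nhdsWithin_le_nhds ?_)
    refine eventually_all.2 fun i => eventually_all.2 fun j => ?_
    have : Tendsto (fun s : ℝ => |(r i - r j) * s|) (𝓝 0) (𝓝 0) := by
      simpa using ((continuous_const.mul continuous_id).abs.tendsto (0 : ℝ))
    exact this.eventually (gt_mem_nhds Real.two_pi_pos)
  obtain ⟨s, hs0, hs⟩ := hsmall.exists
  refine ⟨s, fun i j hij => hr ?_⟩
  have : r i * s = r j * s := eq_of_exp_mul_I_eq_of_abs_sub_lt (by rw [← sub_mul]; exact hs i j) (by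
    push_cast; simpa [mul_comm, mul_left_comm] using hij)
  exact mul_right_cancel₀ hs0 this

theorem Matrix.tendsto_zero_of_tendsto_vecMul_zero {α n 𝕜 : Type*} [Fintype n] [DecidableEq n]
    [Field 𝕜] [TopologicalSpace 𝕜] [IsTopologicalRing 𝕜] {l : Filter α} {M : Matrix n n 𝕜}
    (hM : M.det ≠ 0) {u : α → n → 𝕜} (hu : Tendsto (fun t => u t ᵥ* M) l (𝓝 0)) :
    Tendsto u l (𝓝 0) := by
  have hinv : ∀ t, u t = (u t ᵥ* M) ᵥ* M⁻¹ := fun t => by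
    rw [vecMul_vecMul, mul_nonsing_inv M (isUnit_iff_ne_zero.2 hM), vecMul_one]
  have hcont : Continuous fun v : n → 𝕜 => v ᵥ* M⁻¹ := continuous_id.matrix_vecMul continuous_const
  simpa [Function.comp_def, ← hinv] using (hcont.tendsto 0).comp hu

theorem sum_mul_exp_I_mul_add_nat_mul_eq_vecMul_vandermonde {m : ℕ} (a : Fin m → ℂ) (r : Fin m → ℝ)
    (t s : ℝ) (j : Fin m) :
    ∑ k, a k * cexp (I * r k * ↑(t + j * s)) =
      ((fun k => a k * cexp (I * r k * t)) ᵥ* vandermonde fun k => cexp (I * r k * s)) j := by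
  simp only [vecMul, dotProduct, vandermonde_apply]
  refine Finset.sum_congr rfl fun k _ => ?_
  rw [← Complex.exp_nat_mul, mul_assoc (a k), ← Complex.exp_add]
  push_cast
  ring_nf

theorem norm_mul_exp_I_mul_ofReal (c : ℂ) (x t : ℝ) : ‖c * cexp (I * x * t)‖ = ‖c‖ := by
  rw [norm_mul, show I * x * t = ↑(x * t) * I by push_cast; ring, norm_exp_ofReal_mul_I, mul_one]

theorem eq_zero_of_tendsto_sum_mul_exp_I_mul {m : ℕ} {a : Fin m → ℂ} {r : Fin m → ℝ}
    (hr : Function.Injective r)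
    (hlim : Tendsto (fun t : ℝ => ∑ k, a k * cexp (I * r k * t)) atTop (𝓝 0)) : a = 0 := by
  obtain ⟨s, hs⟩ := exists_injective_exp_mul_I_mul hr
  set u : ℝ → Fin m → ℂ := fun t k => a k * cexp (I * r k * t)
  have hshifted : Tendsto (fun t => u t ᵥ* vandermonde fun k => cexp (I * r k * s)) atTop (𝓝 0) :=
    tendsto_pi_nhds.2 fun j => by
      simpa only [u, ← sum_mul_exp_I_mul_add_nat_mul_eq_vecMul_vandermonde, Pi.zero_apply,
        Function.comp_def, id] using
        hlim.comp (tendsto_atTop_add_const_right _ ((j : ℕ) * s) tendsto_id)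
  have hu := tendsto_pi_nhds.1 <|
    tendsto_zero_of_tendsto_vecMul_zero (det_vandermonde_ne_zero_iff.2 hs) hshifted
  funext k
  have hconst : Tendsto (fun _ : ℝ => ‖a k‖) atTop (𝓝 0) := by
    simpa only [u, norm_mul_exp_I_mul_ofReal, Pi.zero_apply, norm_zero] using (hu k).norm
  exact norm_eq_zero.1 (tendsto_const_nhds_iff.1 hconst)

theorem sum_complex_oscillations_tendsto_zero_imp_coeffs_zero_general
    (m : ℕ) (a : Fin m → ℂ) (r : Fin m → ℝ)
    (hrmono : StrictMono r)
    (hlim : Tendsto (fun t : ℝ => ∑ k, a k * Complex.exp (Complex.I * (r k : ℂ) * (t : ℂ)))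
      atTop (nhds 0)) :
    ∀ k, a k = 0 :=
  congrFun (eq_zero_of_tendsto_sum_mul_exp_I_mul hrmono.injective hlim)

/-- If `m ≥ 1`, `a₁, …, a_m ∈ ℂ`, `0 < r₁ < r₂ < ⋯ < r_m` are real, and
`∑_{k=1}^m a_k e^{i r_k t} → 0` as the real variable `t → ∞`, then all `a_k = 0`. -/
theorem sum_complex_oscillations_tendsto_zero_imp_coeffs_zero
    (m : ℕ) (hm : 0 < m) (a : Fin m → ℂ) (r : Fin m → ℝ)
    (hrpos : ∀ k, 0 < r k) (hrmono : StrictMono r)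
    (hlim : Tendsto (fun t : ℝ => ∑ k, a k * Complex.exp (Complex.I * (r k : ℂ) * (t : ℂ)))
      atTop (nhds 0)) :
    ∀ k, a k = 0 :=
  sum_complex_oscillations_tendsto_zero_imp_coeffs_zero_general m a r hrmono hlim
end

section
/- Let X be a normed space over ℂ, let μ ∈ ℝ, let S be a finite subset of ℂ with Re λ = μ for every λ ∈ S, and let p_λ, q_λ : ℝ → X be polynomials for each λ ∈ S. Define g(t) = Σ_{λ∈S} p_λ(t) e^{λt} and h(t) = Σ_{λ∈S} q_λ(t) e^{λt} for t ∈ ℝ. If e^{-μt}(g(t) − h(t)) → 0 in X as t → ∞, then p_λ = q_λ for all λ ∈ S. -/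
open Filter

/-- `p : ℝ → X` is an `X`-valued polynomial (with `X` a complex linear space). -/
def IsPolyFun {X : Type*} [AddCommGroup X] [Module ℂ X] (p : ℝ → X) : Prop :=
  ∃ (d : ℕ) (c : ℕ → X), ∀ t : ℝ, p t = ∑ j ∈ Finset.range (d + 1), ((t : ℂ) ^ j) • c j

/-!
Multiplying by `e^{-μt}` turns `g - h` into `∑ₗ e^{i (Im l) t} rₗ(t)` with polynomials
`rₗ = pₗ - qₗ` and pairwise distinct frequencies `Im l`. Dividing by `t^D` shows that the
trigonometric polynomial formed by the coefficients of `t^D` tends to `0`, which allows an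
induction on the degree `D`. A trigonometric polynomial `∑ e^{iωt} c_ω` tending to `0` vanishes:
the difference operator `f ↦ f (· + h) - e^{iω₀h} f` removes the frequency `ω₀` and multiplies
every other coefficient by `e^{iωh} - e^{iω₀h}`, which is nonzero for all but countably many `h`;
once the other coefficients are known to vanish, what remains, `e^{iω₀t} c_{ω₀}`, has constant
norm `‖c_{ω₀}‖`.
-/

open Finset Topology

theorem IsPolyFun.eventually_exists_coeff {X : Type*} [AddCommGroup X] [Module ℂ X] {p : ℝ → X}
    (hp : IsPolyFun p) :
    ∀ᶠ D in atTop, ∃ c : ℕ → X, ∀ t : ℝ, p t = ∑ j ∈ range (D + 1), (t : ℂ) ^ j • c j := by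
  obtain ⟨d, c, hc⟩ := hp
  filter_upwards [eventually_ge_atTop d] with D hD
  refine ⟨fun j => if j ≤ d then c j else 0, fun t => ?_⟩
  rw [hc, ← sum_subset (range_subset_range.2 (by omega : d + 1 ≤ D + 1))]
  · exact sum_congr rfl fun j hj => by simp_all
  · exact fun j _ hj => by simp_all

theorem exists_forall_exp_mul_I_ne {ι : Type*} {S : Finset ι} {ω : ι → ℝ} {a : ι}
    (hω : ∀ i ∈ S, ω i ≠ ω a) :
    ∃ h : ℝ, ∀ i ∈ S, Complex.exp ((ω i * h : ℝ) * Complex.I) ≠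
      Complex.exp ((ω a * h : ℝ) * Complex.I) := by
  set bad : Set ℝ := ⋃ i ∈ S, Set.range fun n : ℤ => n * (2 * Real.pi) / (ω i - ω a)
  have hbad : bad.Countable :=
    S.countable_toSet.biUnion fun _ _ => Set.countable_range _
  obtain ⟨h, hh⟩ := (hbad.dense_compl ℝ).nonempty
  refine ⟨h, fun i hi heq => hh (Set.mem_biUnion hi ?_)⟩
  obtain ⟨n, hn⟩ := Complex.exp_eq_exp_iff_exists_int.1 heq
  have hn' : (ω i - ω a) * h = n * (2 * Real.pi) := by
    have hI : (((ω i - ω a) * h : ℝ) : ℂ) * Complex.I =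
        ((n * (2 * Real.pi) : ℝ) : ℂ) * Complex.I := by
      push_cast at hn ⊢
      linear_combination hn
    exact_mod_cast mul_right_cancel₀ Complex.I_ne_zero hI
  exact ⟨n, by simp only [← hn', mul_div_cancel_left₀ _ (sub_ne_zero.2 (hω i hi))]⟩

section

variable {X : Type*} [NormedAddCommGroup X] [NormedSpace ℂ X] {ι : Type*}

theorem tendsto_sub_smul_comp_add_const {f : ℝ → X} (hf : Tendsto f atTop (𝓝 0)) (h : ℝ)
    (w : ℂ) : Tendsto (fun t => f (t + h) - w • f t) atTop (𝓝 0) := by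
  simpa using (hf.comp (tendsto_atTop_add_const_right _ h tendsto_id)).sub (hf.const_smul w)

theorem eq_zero_of_tendsto_sum_exp_mul_I_smul {S : Finset ι} {ω : ι → ℝ} (hω : Set.InjOn ω S)
    {c : ι → X}
    (hc : Tendsto (fun t : ℝ => ∑ i ∈ S, Complex.exp ((ω i * t : ℝ) * Complex.I) • c i)
      atTop (𝓝 0)) :
    ∀ i ∈ S, c i = 0 := by
  classical
  induction S using Finset.induction_on generalizing c with
  | empty => simp
  | insert a S ha ih =>
    rw [coe_insert, Set.injOn_insert (by simpa using ha)] at hω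
    have hne : ∀ i ∈ S, ω i ≠ ω a := fun i hi h => hω.2 ⟨i, hi, h⟩
    obtain ⟨h, hh⟩ := exists_forall_exp_mul_I_ne hne
    have hshift : ∀ i t, Complex.exp ((ω i * (t + h) : ℝ) * Complex.I) =
        Complex.exp ((ω i * h : ℝ) * Complex.I) * Complex.exp ((ω i * t : ℝ) * Complex.I) := by
      intro i t
      rw [← Complex.exp_add]
      push_cast
      ring_nf
    have hdiff : Tendsto (fun t : ℝ => ∑ i ∈ S, Complex.exp ((ω i * t : ℝ) * Complex.I) •
        ((Complex.exp ((ω i * h : ℝ) * Complex.I) - Complex.exp ((ω a * h : ℝ) * Complex.I)) •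
          c i)) atTop (𝓝 0) := by
      refine (tendsto_sub_smul_comp_add_const hc h
        (Complex.exp ((ω a * h : ℝ) * Complex.I))).congr fun t => ?_
      rw [sum_insert ha, sum_insert ha, smul_add, add_sub_add_comm, hshift, ← smul_smul, sub_self,
        zero_add, smul_sum, ← sum_sub_distrib]
      refine sum_congr rfl fun i _ => ?_
      rw [hshift]
      module
    have hS : ∀ i ∈ S, c i = 0 := fun i hi =>
      (smul_eq_zero.1 (ih hω.1 hdiff i hi)).resolve_left (sub_ne_zero.2 (hh i hi))
    have hca : Tendsto (fun _ : ℝ => ‖c a‖) atTop (𝓝 0) := by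
      refine (tendsto_zero_iff_norm_tendsto_zero.1 hc).congr fun t => ?_
      rw [sum_insert ha, sum_eq_zero fun i hi => by rw [hS i hi, smul_zero], add_zero, norm_smul,
        Complex.norm_exp_ofReal_mul_I, one_mul]
    intro i hi
    rcases mem_insert.1 hi with rfl | hi
    · exact norm_eq_zero.1 (tendsto_nhds_unique tendsto_const_nhds hca)
    · exact hS i hi

theorem tendsto_inv_pow_mul_pow {j D : ℕ} (hj : j < D) :
    Tendsto (fun t : ℝ => ((t : ℂ) ^ D)⁻¹ * (t : ℂ) ^ j) atTop (𝓝 0) := by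
  have h := (tendsto_inv_atTop_zero.comp (tendsto_pow_atTop (Nat.sub_ne_zero_of_lt hj))).ofReal
  rw [Complex.ofReal_zero] at h
  refine h.congr' ?_
  filter_upwards [eventually_gt_atTop 0] with t ht
  have ht' : (t : ℂ) ≠ 0 := by exact_mod_cast ht.ne'
  simp only [Function.comp_apply, Complex.ofReal_inv, Complex.ofReal_pow]
  rw [pow_sub₀ _ ht' hj.le]
  field_simp

theorem tendsto_last_of_tendsto_sum_pow_smul {G : ℕ → ℝ → X} {D : ℕ}
    (hG : ∀ j < D, IsBoundedUnder (· ≤ ·) atTop (norm ∘ G j))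
    (h : Tendsto (fun t : ℝ => ∑ j ∈ range (D + 1), (t : ℂ) ^ j • G j t) atTop (𝓝 0)) :
    Tendsto (G D) atTop (𝓝 0) := by
  have hinv : IsBoundedUnder (· ≤ ·) atTop (norm ∘ fun t : ℝ => ((t : ℂ) ^ D)⁻¹) := by
    refine isBoundedUnder_of_eventually_le (a := 1) ?_
    filter_upwards [eventually_ge_atTop 1] with t ht
    simpa [abs_of_pos (one_pos.trans_le ht)] using inv_le_one_of_one_le₀ (one_le_pow₀ ht)
  have hlow := tendsto_finsetSum (range D) fun j hj =>
    (tendsto_inv_pow_mul_pow (mem_range.1 hj)).zero_smul_isBoundedUnder_le (hG j (mem_range.1 hj))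
  have := (hinv.smul_tendsto_zero h).sub hlow
  rw [sum_const_zero, sub_zero] at this
  refine this.congr' ?_
  filter_upwards [eventually_gt_atTop 0] with t ht
  have ht' : (t : ℂ) ^ D ≠ 0 := pow_ne_zero _ (by exact_mod_cast ht.ne')
  simp only [sum_range_succ, smul_add, smul_sum, smul_smul, inv_mul_cancel₀ ht', one_smul]
  abel

theorem isBoundedUnder_norm_sum_exp_mul_I_smul (l : Filter ℝ) (S : Finset ι) (ω : ι → ℝ)
    (c : ι → X) :
    IsBoundedUnder (· ≤ ·) l
      (norm ∘ fun t : ℝ => ∑ i ∈ S, Complex.exp ((ω i * t : ℝ) * Complex.I) • c i) :=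
  isBoundedUnder_of ⟨∑ i ∈ S, ‖c i‖, fun t => (norm_sum_le _ _).trans_eq <| sum_congr rfl
    fun i _ => by rw [norm_smul, Complex.norm_exp_ofReal_mul_I, one_mul]⟩

theorem coeff_eq_zero_of_tendsto_sum_exp_mul_I_smul_poly {S : Finset ι} {ω : ι → ℝ}
    (hω : Set.InjOn ω S) (D : ℕ) {c : ι → ℕ → X}
    (hc : Tendsto (fun t : ℝ => ∑ i ∈ S, Complex.exp ((ω i * t : ℝ) * Complex.I) •
      ∑ j ∈ range (D + 1), (t : ℂ) ^ j • c i j) atTop (𝓝 0)) :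
    ∀ i ∈ S, ∀ j ∈ range (D + 1), c i j = 0 := by
  induction D with
  | zero => simpa using eq_zero_of_tendsto_sum_exp_mul_I_smul hω (by simpa using hc)
  | succ D ih =>
    set G : ℕ → ℝ → X := fun j t => ∑ i ∈ S, Complex.exp ((ω i * t : ℝ) * Complex.I) • c i j
    have hswap : ∀ t : ℝ, ∑ i ∈ S, Complex.exp ((ω i * t : ℝ) * Complex.I) •
        ∑ j ∈ range (D + 2), (t : ℂ) ^ j • c i j = ∑ j ∈ range (D + 2), (t : ℂ) ^ j • G j t := by
      intro t
      simp only [G, smul_sum]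
      rw [sum_comm]
      exact sum_congr rfl fun j _ => sum_congr rfl fun i _ => smul_comm _ _ _
    have hG : Tendsto (G (D + 1)) atTop (𝓝 0) := tendsto_last_of_tendsto_sum_pow_smul
      (fun j _ => isBoundedUnder_norm_sum_exp_mul_I_smul _ S ω _) (hc.congr hswap)
    have htop : ∀ i ∈ S, c i (D + 1) = 0 := eq_zero_of_tendsto_sum_exp_mul_I_smul hω hG
    have hlow : ∀ i ∈ S, ∀ j ∈ range (D + 1), c i j = 0 := ih <| hc.congr fun t =>
      sum_congr rfl fun i hi => by rw [sum_range_succ, htop i hi, smul_zero, add_zero]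
    intro i hi j hj
    rcases mem_insert.1 (range_add_one ▸ hj) with rfl | hj
    exacts [htop i hi, hlow i hi j hj]

end

/-- Lemma `uniE`. Let `X` be a complex normed space, `μ ∈ ℝ`, `S ⊆ ℂ` a finite
set with `Re λ = μ` for all `λ ∈ S`, and `p_λ, q_λ : ℝ → X` polynomials.  If
`g(t) = ∑_{λ∈S} p_λ(t) e^{λ t}`, `h(t) = ∑_{λ∈S} q_λ(t) e^{λ t}`, and
`e^{-μ t}(g(t) - h(t)) → 0` as `t → ∞`, then `p_λ = q_λ` for all `λ ∈ S`. -/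
theorem uniqueness_in_FE_class
    {X : Type*} [NormedAddCommGroup X] [NormedSpace ℂ X]
    (μ : ℝ) (S : Finset ℂ) (hS : ∀ l ∈ S, l.re = μ)
    (p q : ℂ → ℝ → X)
    (hp : ∀ l ∈ S, IsPolyFun (p l)) (hq : ∀ l ∈ S, IsPolyFun (q l))
    (g h : ℝ → X)
    (hg : ∀ t : ℝ, g t = ∑ l ∈ S, Complex.exp (l * t) • p l t)
    (hh : ∀ t : ℝ, h t = ∑ l ∈ S, Complex.exp (l * t) • q l t)
    (hlim : Tendsto (fun t : ℝ => ((Real.exp (-μ * t) : ℂ)) • (g t - h t)) atTop (nhds 0)) :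
    ∀ l ∈ S, ∀ t : ℝ, p l t = q l t := by
  obtain ⟨D, hpD, hqD⟩ := (((eventually_all_finset S).2 fun l hl =>
    (hp l hl).eventually_exists_coeff).and ((eventually_all_finset S).2 fun l hl =>
      (hq l hl).eventually_exists_coeff)).exists
  choose! a ha using hpD
  choose! b hb using hqD
  have hexp : ∀ l ∈ S, ∀ t : ℝ, (Real.exp (-μ * t) : ℂ) * Complex.exp (l * t) =
      Complex.exp ((l.im * t : ℝ) * Complex.I) := by
    intro l hl t
    rw [Complex.ofReal_exp, ← Complex.exp_add]
    conv_lhs => rw [← Complex.re_add_im l, hS l hl]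
    push_cast
    ring_nf
  have hdiff : Tendsto (fun t : ℝ => ∑ l ∈ S, Complex.exp ((l.im * t : ℝ) * Complex.I) •
      ∑ j ∈ range (D + 1), (t : ℂ) ^ j • (a l j - b l j)) atTop (𝓝 0) := by
    refine hlim.congr fun t => ?_
    rw [hg, hh, ← sum_sub_distrib, smul_sum]
    refine sum_congr rfl fun l hl => ?_
    rw [← smul_sub, smul_smul, hexp l hl, ha l hl, hb l hl, ← sum_sub_distrib]
    simp only [smul_sub]
  have hinj : Set.InjOn Complex.im S := fun l hl l' hl' him =>
    Complex.ext ((hS l hl).trans (hS l' hl').symm) him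
  intro l hl t
  rw [ha l hl, hb l hl]
  exact sum_congr rfl fun j hj => by
    rw [sub_eq_zero.1 (coeff_eq_zero_of_tendsto_sum_exp_mul_I_smul_poly hinj D hdiff l hl j hj)]
end

section
/- Let m ∈ ℤ₊ and λ > 0, γ > 0 be given. For any number T_* > E_m(0), there exists a number C > 0 such that ∫₀ᵗ e^{−γ(t−τ)} L_m(T_* + τ)^{−λ} dτ ≤ C · L_m(T_* + t)^{−λ} for all t ≥ 0. -/
noncomputable section

/-- Iterated exponential: `EE m` is `E_m` (`E_0(t) = t`, `E_{m+1}(t) = exp (E_m t)`). -/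
def EE : ℕ → ℝ → ℝ
  | 0 => fun t => t
  | m + 1 => fun t => Real.exp (EE m t)

/-- Iterated logarithm: `LL m` is `L_m` (`L_0(t) = t`, `L_{m+1}(t) = ln (L_m t)`). -/
def LL : ℕ → ℝ → ℝ
  | 0 => fun t => t
  | m + 1 => fun t => Real.log (LL m t)

/-! The function `f τ = L_m(T_* + τ)` is positive, nondecreasing and `1`-Lipschitz on `[0, ∞)`
(each logarithm is `1`-Lipschitz on `[1, ∞)`), so `f t ≤ f τ (1 + (t - τ) / f 0)` for `τ ≤ t`,
and `(1 + u / δ) ^ λ` is bounded by a constant times `exp (γ u / 2)`. Hence, for a constant `K`,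
the integrand is at most `K f(t)^{-λ} e^{-γ (t - τ) / 2}`, whose integral over `[0, t]` is at
most `(2 K / γ) f(t)^{-λ}`. -/

open Real Set MeasureTheory

lemma Real.log_sub_log_le_sub_of_one_le {x y : ℝ} (hx : 1 ≤ x) (hxy : x ≤ y) :
    log y - log x ≤ y - x := by
  have hx0 : 0 < x := by linarith
  calc log y - log x = log (y / x) := (log_div (by linarith) hx0.ne').symm
    _ ≤ y / x - 1 := log_le_sub_one_of_pos (div_pos (by linarith) hx0)
    _ = (y - x) / x := by field_simp
    _ ≤ y - x := div_le_self (by linarith) hx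

lemma EE_lt_EE_succ (m : ℕ) : EE m 0 < EE (m + 1) 0 := by
  have := add_one_le_exp (EE m 0)
  simp only [EE]
  linarith

lemma EE_lt_LL_of_EE_add_lt {k j : ℕ} {s : ℝ} (h : EE (j + k) 0 < s) : EE j 0 < LL k s := by
  induction k generalizing j with
  | zero => exact h
  | succ k ih =>
    have hexp : exp (EE j 0) < LL k s := ih (j := j + 1) (by rwa [Nat.add_right_comm])
    exact (lt_log_iff_exp_lt ((exp_pos _).trans hexp)).2 hexp

lemma LL_pos {m : ℕ} {s : ℝ} (h : EE m 0 < s) : 0 < LL m s :=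
  EE_lt_LL_of_EE_add_lt (j := 0) (by rwa [zero_add])

lemma one_lt_LL {m : ℕ} {s : ℝ} (h : EE (m + 1) 0 < s) : 1 < LL m s := by
  simpa [EE] using EE_lt_LL_of_EE_add_lt (j := 1) (by rwa [add_comm])

lemma LL_monotoneOn (m : ℕ) : MonotoneOn (LL m) (Ioi (EE m 0)) := by
  induction m with
  | zero => exact monotone_id.monotoneOn _
  | succ m ih =>
    intro s hs s' hs' h
    have hsub : ∀ {x}, EE (m + 1) 0 < x → EE m 0 < x := (EE_lt_EE_succ m).trans
    exact log_le_log (LL_pos (hsub hs)) (ih (hsub hs) (hsub hs') h)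

lemma LL_sub_LL_le {m : ℕ} {s s' : ℝ} (hs : EE m 0 < s) (h : s ≤ s') :
    LL m s' - LL m s ≤ s' - s := by
  induction m with
  | zero => exact le_rfl
  | succ m ih =>
    have hs₀ : EE m 0 < s := (EE_lt_EE_succ m).trans hs
    have hmono : LL m s ≤ LL m s' := LL_monotoneOn m hs₀ (hs₀.trans_le h) h
    exact (log_sub_log_le_sub_of_one_le (one_lt_LL hs).le hmono).trans (ih hs₀)

lemma one_add_div_le_mul_exp {δ ε u : ℝ} (hδ : 0 < δ) (hε : 0 < ε) (hu : 0 ≤ u) :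
    1 + u / δ ≤ (1 + 1 / (ε * δ)) * exp (ε * u) := by
  have h₁ : 1 ≤ exp (ε * u) := one_le_exp (by positivity)
  have h₂ : u / δ ≤ exp (ε * u) / (ε * δ) := by
    rw [← mul_div_mul_left u δ hε.ne']
    gcongr
    linarith [add_one_le_exp (ε * u)]
  calc 1 + u / δ ≤ exp (ε * u) + exp (ε * u) / (ε * δ) := add_le_add h₁ h₂
    _ = (1 + 1 / (ε * δ)) * exp (ε * u) := by ring

lemma one_add_div_rpow_le_mul_exp {δ κ lam u : ℝ} (hδ : 0 < δ) (hκ : 0 < κ) (hlam : 0 < lam)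
    (hu : 0 ≤ u) : (1 + u / δ) ^ lam ≤ (1 + lam / (κ * δ)) ^ lam * exp (κ * u) := by
  have hbase := one_add_div_le_mul_exp hδ (div_pos hκ hlam) hu
  have hconst : 1 / (κ / lam * δ) = lam / (κ * δ) := by field_simp
  rw [hconst] at hbase
  calc (1 + u / δ) ^ lam ≤ ((1 + lam / (κ * δ)) * exp (κ / lam * u)) ^ lam :=
        rpow_le_rpow (by positivity) hbase hlam.le
    _ = (1 + lam / (κ * δ)) ^ lam * exp (κ * u) := by
        rw [mul_rpow (by positivity) (exp_pos _).le, ← exp_mul]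
        congr 2
        field_simp

lemma integral_exp_neg_mul_sub_le {κ : ℝ} (hκ : 0 < κ) (t : ℝ) :
    ∫ τ in (0 : ℝ)..t, exp (-κ * (t - τ)) ≤ 1 / κ := by
  have hderiv (τ : ℝ) :
      HasDerivAt (fun τ => exp (-κ * (t - τ)) / κ) (exp (-κ * (t - τ))) τ := by
    refine ((((hasDerivAt_id τ).const_sub t).const_mul (-κ)).exp.div_const κ).congr_deriv ?_
    field_simp
    simp
  rw [intervalIntegral.integral_eq_sub_of_hasDerivAt (fun τ _ => hderiv τ)
    ((by fun_prop : Continuous fun τ => exp (-κ * (t - τ))).intervalIntegrable _ _)]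
  have := exp_pos (-κ * (t - 0))
  simp only [sub_self, mul_zero, exp_zero]
  linarith [div_pos this hκ]

lemma rpow_neg_le_mul_exp_mul_rpow_neg {δ κ lam a b u : ℝ} (hδ : 0 < δ) (hκ : 0 < κ)
    (hlam : 0 < lam) (hδb : δ ≤ b) (ha : 0 < a) (hab : a ≤ b + u) (hu : 0 ≤ u) :
    b ^ (-lam) ≤ (1 + lam / (κ * δ)) ^ lam * exp (κ * u) * a ^ (-lam) := by
  have hb : 0 < b := hδ.trans_le hδb
  have hab' : a ≤ b * (1 + u / δ) := by
    have : u ≤ b * (u / δ) := by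
      rw [← mul_div_assoc, le_div_iff₀ hδ, mul_comm u]
      exact mul_le_mul_of_nonneg_right hδb hu
    linarith
  have key : a ^ lam ≤ b ^ lam * ((1 + lam / (κ * δ)) ^ lam * exp (κ * u)) :=
    calc a ^ lam ≤ (b * (1 + u / δ)) ^ lam := rpow_le_rpow ha.le hab' hlam.le
      _ = b ^ lam * (1 + u / δ) ^ lam := mul_rpow hb.le (by positivity)
      _ ≤ _ := by gcongr; exact one_add_div_rpow_le_mul_exp hδ hκ hlam hu
  rw [rpow_neg hb.le, rpow_neg ha.le, ← div_eq_mul_inv, le_div_iff₀ (by positivity),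
    inv_mul_eq_div, div_le_iff₀ (by positivity), mul_comm]
  exact key

lemma integral_exp_mul_rpow_neg_le_of_sub_le {f : ℝ → ℝ} {lam gam : ℝ} (hlam : 0 < lam)
    (hgam : 0 < gam) (hf₀ : 0 < f 0) (hmono : MonotoneOn f (Ici 0))
    (hlip : ∀ ⦃τ t⦄, 0 ≤ τ → τ ≤ t → f t - f τ ≤ t - τ) {t : ℝ} (ht : 0 ≤ t) :
    ∫ τ in (0 : ℝ)..t, exp (-gam * (t - τ)) * f τ ^ (-lam)
      ≤ (1 + 2 * lam / (gam * f 0)) ^ lam * (2 / gam) * f t ^ (-lam) := by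
  set K := (1 + 2 * lam / (gam * f 0)) ^ lam
  have hf₀_le {τ} (hτ : 0 ≤ τ) : f 0 ≤ f τ := hmono self_mem_Ici hτ hτ
  have hft : 0 < f t := hf₀.trans_le (hf₀_le ht)
  have hbound : ∀ τ ∈ Icc 0 t, exp (-gam * (t - τ)) * f τ ^ (-lam)
      ≤ K * f t ^ (-lam) * exp (-(gam / 2) * (t - τ)) := by
    rintro τ ⟨hτ₀, hτt⟩
    have hf₀' := hf₀.ne'
    have := rpow_neg_le_mul_exp_mul_rpow_neg hf₀ (half_pos hgam) hlam (hf₀_le hτ₀) hft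
      (by linarith [hlip hτ₀ hτt]) (sub_nonneg.2 hτt)
    calc exp (-gam * (t - τ)) * f τ ^ (-lam)
        ≤ exp (-gam * (t - τ)) * (K * exp (gam / 2 * (t - τ)) * f t ^ (-lam)) := by
          rw [show lam / (gam / 2 * f 0) = 2 * lam / (gam * f 0) by field_simp] at this
          gcongr
      _ = K * f t ^ (-lam) * exp (-(gam / 2) * (t - τ)) := by
          rw [show -(gam / 2) * (t - τ) = -gam * (t - τ) + gam / 2 * (t - τ) by ring, exp_add]
          ring
  have hint : IntervalIntegrable (fun τ => exp (-gam * (t - τ)) * f τ ^ (-lam)) volume 0 t := by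
    refine AntitoneOn.intervalIntegrable ?_ |>.continuousOn_mul (by fun_prop)
    rw [uIcc_of_le ht]
    intro x hx y hy hxy
    exact rpow_le_rpow_of_nonpos (hf₀.trans_le (hf₀_le hx.1)) (hmono hx.1 hy.1 hxy) (by linarith)
  have hmaj : IntervalIntegrable (fun τ => K * f t ^ (-lam) * exp (-(gam / 2) * (t - τ)))
      volume 0 t :=
    Continuous.intervalIntegrable (by fun_prop) _ _
  calc ∫ τ in (0 : ℝ)..t, exp (-gam * (t - τ)) * f τ ^ (-lam)
      ≤ ∫ τ in (0 : ℝ)..t, K * f t ^ (-lam) * exp (-(gam / 2) * (t - τ)) :=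
        intervalIntegral.integral_mono_on ht hint hmaj hbound
    _ = K * f t ^ (-lam) * ∫ τ in (0 : ℝ)..t, exp (-(gam / 2) * (t - τ)) :=
        intervalIntegral.integral_const_mul _ _
    _ ≤ K * f t ^ (-lam) * (1 / (gam / 2)) := by
        gcongr; exact integral_exp_neg_mul_sub_le (half_pos hgam) t
    _ = K * (2 / gam) * f t ^ (-lam) := by ring

/-- Lemma 2.5 of [CaH3].  For `m ∈ ℤ₊`, `λ, γ > 0` and `T_* > E_m(0)`
there is `C > 0` with
`∫₀ᵗ e^{-γ(t-τ)} L_m(T_* + τ)^{-λ} dτ ≤ C L_m(T_* + t)^{-λ}` for all `t ≥ 0`. -/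
theorem integral_iterated_log_decay_bound
    (m : ℕ) (lam gam : ℝ) (hlam : 0 < lam) (hgam : 0 < gam)
    (Tstar : ℝ) (hT : EE m 0 < Tstar) :
    ∃ C > 0, ∀ t ≥ (0 : ℝ),
      (∫ τ in (0:ℝ)..t, Real.exp (-gam * (t - τ)) * LL m (Tstar + τ) ^ (-lam))
        ≤ C * LL m (Tstar + t) ^ (-lam) := by
  have hdom {τ : ℝ} (hτ : 0 ≤ τ) : EE m 0 < Tstar + τ := by linarith
  have hLL₀ := LL_pos (hdom le_rfl)
  refine ⟨_, by positivity, fun t ht => integral_exp_mul_rpow_neg_le_of_sub_le hlam hgam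
    (f := fun τ => LL m (Tstar + τ)) hLL₀ ?_ ?_ ht⟩
  · exact fun τ hτ τ' hτ' h => LL_monotoneOn m (hdom hτ) (hdom hτ') (add_le_add_right h _)
  · exact fun τ t hτ h => by
      simpa using LL_sub_LL_le (hdom hτ) (add_le_add_right h _)
end
end
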